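/- Let k be a field, M a finite-dimensional k-vector space, and Φ a k-linear automorphism of M ⊗ M satisfying the pentagon equation. For ω ∈ End(M)* set λ(ω) = (ω ⊗ id)(Φ) and ρ(ω) = (id ⊗ ω)(Φ), and Δ_l(x) = Φ ∘ (x ⊗ id_M) ∘ Φ⁻¹ regarded as an element of End(M) ⊗ End(M). Suppose ε ∈ End(M)* satisfies ρ(ε) = id_M. Then: (i) ε(λ(ω)) = ω(id_M) for all ω ∈ End(M)*; (ii) ε(λ(ω) ∘ λ(ω')) = ε(λ(ω)) · ε(λ(ω')) for all ω, ω' ∈ End(M)*; (iii) (ε ⊗ id)(Δ_l(λ(ω))) = λ(ω) = (id ⊗ ε)(Δ_l(λ(ω))) for all ω ∈ End(M)*. -/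
import Mathlib


open TensorProduct

noncomputable section

variable {k : Type*} [Field k]

/-- Apply `G` to tensor factors 1 and 2 of a triple tensor product. -/
def m12 {A B C P Q : Type*}
    [AddCommGroup A] [AddCommGroup B] [AddCommGroup C] [AddCommGroup P] [AddCommGroup Q]
    [Module k A] [Module k B] [Module k C] [Module k P] [Module k Q]
    (G : A ⊗[k] B →ₗ[k] P ⊗[k] Q) :
    A ⊗[k] (B ⊗[k] C) →ₗ[k] P ⊗[k] (Q ⊗[k] C) :=
  (TensorProduct.assoc k P Q C).toLinearMap ∘ₗ G.rTensor C ∘ₗ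
    (TensorProduct.assoc k A B C).symm.toLinearMap

/-- Apply `G` to tensor factors 2 and 3 of a triple tensor product. -/
def m23 {A B C Q R : Type*}
    [AddCommGroup A] [AddCommGroup B] [AddCommGroup C] [AddCommGroup Q] [AddCommGroup R]
    [Module k A] [Module k B] [Module k C] [Module k Q] [Module k R]
    (G : B ⊗[k] C →ₗ[k] Q ⊗[k] R) :
    A ⊗[k] (B ⊗[k] C) →ₗ[k] A ⊗[k] (Q ⊗[k] R) :=
  G.lTensor A

/-- Apply `G` to tensor factors 1 and 3 of a triple tensor product. -/
def m13 {A B C P R : Type*}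
    [AddCommGroup A] [AddCommGroup B] [AddCommGroup C] [AddCommGroup P] [AddCommGroup R]
    [Module k A] [Module k B] [Module k C] [Module k P] [Module k R]
    (G : A ⊗[k] C →ₗ[k] P ⊗[k] R) :
    A ⊗[k] (B ⊗[k] C) →ₗ[k] P ⊗[k] (B ⊗[k] R) :=
  ((TensorProduct.comm k R B).toLinearMap.lTensor P) ∘ₗ
    (TensorProduct.assoc k P R B).toLinearMap ∘ₗ G.rTensor B ∘ₗ
    (TensorProduct.assoc k A C B).symm.toLinearMap ∘ₗ
    ((TensorProduct.comm k B C).toLinearMap.lTensor A)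

/-- The modified pentagon equation for a pair `(F, Φ)`:
`F₁₂ ∘ F₁₃ ∘ Φ₂₃ = F₂₃ ∘ F₁₂` as maps `V ⊗ M ⊗ M → V ⊗ V ⊗ V`. -/
def MPE {V M : Type*} [AddCommGroup V] [AddCommGroup M] [Module k V] [Module k M]
    (F : V ⊗[k] M →ₗ[k] V ⊗[k] V) (Φ : M ⊗[k] M →ₗ[k] M ⊗[k] M) : Prop :=
  m12 F ∘ₗ m13 F ∘ₗ m23 Φ = m23 F ∘ₗ m12 F

/-- The pentagon equation: `Φ₁₂ ∘ Φ₁₃ ∘ Φ₂₃ = Φ₂₃ ∘ Φ₁₂` on `M ⊗ M ⊗ M`. -/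
def PE {M : Type*} [AddCommGroup M] [Module k M]
    (Φ : M ⊗[k] M →ₗ[k] M ⊗[k] M) : Prop :=
  m12 Φ ∘ₗ m13 Φ ∘ₗ m23 Φ = m23 Φ ∘ₗ m12 Φ

section PentagonEnd

variable {M : Type*} [AddCommGroup M] [Module k M] [FiniteDimensional k M]

/-- The canonical identification `End(M) ⊗ End(M) ≃ End(M ⊗ M)`. -/
noncomputable def e2 (M : Type*) [AddCommGroup M] [Module k M] [FiniteDimensional k M] :
    (Module.End k M) ⊗[k] (Module.End k M) ≃ₗ[k] Module.End k (M ⊗[k] M) :=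
  homTensorHomEquiv k M M M M

/-- The canonical identification `End(M) ⊗ (End(M) ⊗ End(M)) ≃ End(M ⊗ (M ⊗ M))`. -/
noncomputable def e3 (M : Type*) [AddCommGroup M] [Module k M] [FiniteDimensional k M] :
    (Module.End k M) ⊗[k] ((Module.End k M) ⊗[k] (Module.End k M)) ≃ₗ[k]
      Module.End k (M ⊗[k] (M ⊗[k] M)) :=
  TensorProduct.congr (LinearEquiv.refl k (Module.End k M)) (e2 M) ≪≫ₗ
    homTensorHomEquiv k M (M ⊗[k] M) M (M ⊗[k] M)

variable (Φ : M ⊗[k] M ≃ₗ[k] M ⊗[k] M)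

/-- `λ(ω) = (ω ⊗ id)(Φ)`, where `Φ` is regarded as an element of `End(M) ⊗ End(M)`. -/
noncomputable def lam (ω : Module.Dual k (Module.End k M)) : Module.End k M :=
  TensorProduct.lid k (Module.End k M)
    (TensorProduct.map ω LinearMap.id ((e2 M).symm Φ.toLinearMap))

/-- `ρ(ω) = (id ⊗ ω)(Φ)`, where `Φ` is regarded as an element of `End(M) ⊗ End(M)`. -/
noncomputable def rho (ω : Module.Dual k (Module.End k M)) : Module.End k M :=
  TensorProduct.rid k (Module.End k M)
    (TensorProduct.map LinearMap.id ω ((e2 M).symm Φ.toLinearMap))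

/-- The comultiplication `Δ_l(x) = Φ ∘ (x ⊗ id_M) ∘ Φ⁻¹`, as a linear map
`End(M) → End(M ⊗ M)`. -/
noncomputable def deltaL : Module.End k M →ₗ[k] Module.End k (M ⊗[k] M) :=
  (LinearEquiv.conj Φ).toLinearMap ∘ₗ
    LinearMap.rTensorHom (R := k) (N := M) (P := M) M

/-- The comultiplication `Δ_r(x) = Φ⁻¹ ∘ (id_M ⊗ x) ∘ Φ`, as a linear map
`End(M) → End(M ⊗ M)`. -/
noncomputable def deltaR : Module.End k M →ₗ[k] Module.End k (M ⊗[k] M) :=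
  (LinearEquiv.conj Φ.symm).toLinearMap ∘ₗ
    LinearMap.lTensorHom (R := k) (N := M) (P := M) M

/-- The product `ω *_r ω' = (ω ⊗ ω') ∘ Δ_r` on `End(M)*`. -/
noncomputable def dualMulR (ω ω' : Module.Dual k (Module.End k M)) :
    Module.Dual k (Module.End k M) :=
  (TensorProduct.lid k k).toLinearMap ∘ₗ TensorProduct.map ω ω' ∘ₗ
    (e2 M).symm.toLinearMap ∘ₗ deltaR Φ

/-- The product `ω *_l ω' = (ω ⊗ ω') ∘ Δ_l` on `End(M)*`. -/
noncomputable def dualMulL (ω ω' : Module.Dual k (Module.End k M)) :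
    Module.Dual k (Module.End k M) :=
  (TensorProduct.lid k k).toLinearMap ∘ₗ TensorProduct.map ω ω' ∘ₗ
    (e2 M).symm.toLinearMap ∘ₗ deltaL Φ

end PentagonEnd

set_option maxHeartbeats 1000000
set_option linter.unusedSectionVars false
set_option synthInstance.maxHeartbeats 400000

section Stmt15Aux
variable {M : Type} [AddCommGroup M] [Module k M] [FiniteDimensional k M]

local notation "E" => Module.End k M

noncomputable local instance instS3 :
    Semiring ((Module.End k M) ⊗[k] ((Module.End k M) ⊗[k] (Module.End k M))) := by
  exact Algebra.TensorProduct.instSemiring (R := k) (A := E) (B := E ⊗[k] E)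

noncomputable local instance instA3 :
    Algebra k ((Module.End k M) ⊗[k] ((Module.End k M) ⊗[k] (Module.End k M))) := by
  exact Algebra.TensorProduct.instAlgebra (R := k) (A := E) (B := E ⊗[k] E)

lemma e2_tmul (a b : E) : e2 M (a ⊗ₜ[k] b) = TensorProduct.map a b := by
  simp [e2, homTensorHomEquiv_apply]

lemma mul3_tmul (a b c p q r : E) :
    ((a ⊗ₜ[k] (b ⊗ₜ[k] c)) * (p ⊗ₜ[k] (q ⊗ₜ[k] r)) : E ⊗[k] (E ⊗[k] E))
      = (a * p) ⊗ₜ[k] ((b * q) ⊗ₜ[k] (c * r)) := by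
  simp [Algebra.TensorProduct.tmul_mul_tmul]

lemma one3 : (1 : E ⊗[k] (E ⊗[k] E)) = (1 : E) ⊗ₜ[k] ((1 : E) ⊗ₜ[k] (1 : E)) := by
  rw [Algebra.TensorProduct.one_def, Algebra.TensorProduct.one_def]

lemma one2 : (1 : E ⊗[k] E) = (1 : E) ⊗ₜ[k] (1 : E) := Algebra.TensorProduct.one_def

lemma e2_mul (x y : E ⊗[k] E) : e2 M (x * y) = e2 M x * e2 M y := by
  induction x using TensorProduct.induction_on with
  | zero => simp [zero_mul]
  | add u v hu hv => simp only [add_mul, map_add, hu, hv]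
  | tmul a b =>
    induction y using TensorProduct.induction_on with
    | zero => simp [mul_zero]
    | add u v hu hv => simp only [mul_add, map_add, hu, hv]
    | tmul c d =>
      rw [Algebra.TensorProduct.tmul_mul_tmul, e2_tmul, e2_tmul, e2_tmul]
      simp only [Module.End.mul_eq_comp, TensorProduct.map_comp]

lemma e2_one : e2 M (1 : E ⊗[k] E) = 1 := by
  rw [one2, e2_tmul]
  ext u v
  rfl

lemma e3_tmul (a b c : E) :
    e3 M (a ⊗ₜ[k] (b ⊗ₜ[k] c)) = TensorProduct.map a (TensorProduct.map b c) := by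
  simp [e3, e2, homTensorHomEquiv_apply]

lemma e3_mul_pure (a b c : E) (y : E ⊗[k] (E ⊗[k] E)) :
    e3 M ((a ⊗ₜ[k] (b ⊗ₜ[k] c)) * y) = e3 M (a ⊗ₜ[k] (b ⊗ₜ[k] c)) * e3 M y := by
  induction y using TensorProduct.induction_on with
  | zero => simp [mul_zero]
  | add u v hu hv => simp only [mul_add, map_add, hu, hv]
  | tmul p w =>
    induction w using TensorProduct.induction_on with
    | zero => simp [tmul_zero, mul_zero]
    | add u v hu hv => simp only [tmul_add, mul_add, map_add, hu, hv]
    | tmul q r =>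
      rw [mul3_tmul, e3_tmul, e3_tmul, e3_tmul]
      simp only [Module.End.mul_eq_comp, TensorProduct.map_comp]

lemma e3_mul (x y : E ⊗[k] (E ⊗[k] E)) : e3 M (x * y) = e3 M x * e3 M y := by
  induction x using TensorProduct.induction_on with
  | zero => simp [zero_mul]
  | add u v hu hv => simp only [add_mul, map_add, hu, hv]
  | tmul a w =>
    induction w using TensorProduct.induction_on with
    | zero => simp [tmul_zero, zero_mul]
    | add u v hu hv => simp only [tmul_add, add_mul, map_add, hu, hv]
    | tmul b c => exact e3_mul_pure a b c y

/-- leg embeddings -/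
noncomputable def j12 : E ⊗[k] E →ₗ[k] E ⊗[k] (E ⊗[k] E) :=
  TensorProduct.map LinearMap.id ((TensorProduct.mk k E E).flip 1)

noncomputable def j13 : E ⊗[k] E →ₗ[k] E ⊗[k] (E ⊗[k] E) :=
  TensorProduct.map LinearMap.id (TensorProduct.mk k E E 1)

noncomputable def j23 : E ⊗[k] E →ₗ[k] E ⊗[k] (E ⊗[k] E) :=
  TensorProduct.mk k E (E ⊗[k] E) 1

lemma j12_tmul (a b : E) : j12 (a ⊗ₜ[k] b) = a ⊗ₜ[k] (b ⊗ₜ[k] (1 : E)) := rfl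
lemma j13_tmul (a b : E) : j13 (a ⊗ₜ[k] b) = a ⊗ₜ[k] ((1 : E) ⊗ₜ[k] b) := rfl
lemma j23_tmul (a b : E) : j23 (a ⊗ₜ[k] b) = (1 : E) ⊗ₜ[k] (a ⊗ₜ[k] b) := rfl

lemma j12_mul (x y : E ⊗[k] E) : j12 (x * y) = j12 x * j12 y := by
  induction x using TensorProduct.induction_on with
  | zero => simp [zero_mul]
  | add u v hu hv => simp only [add_mul, map_add, hu, hv]
  | tmul a b =>
    induction y using TensorProduct.induction_on with
    | zero => simp [mul_zero]
    | add u v hu hv => simp only [mul_add, map_add, hu, hv]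
    | tmul c d =>
      rw [Algebra.TensorProduct.tmul_mul_tmul, j12_tmul, j12_tmul, j12_tmul, mul3_tmul,
        one_mul]

lemma j23_mul (x y : E ⊗[k] E) : j23 (x * y) = j23 x * j23 y := by
  induction x using TensorProduct.induction_on with
  | zero => simp [zero_mul]
  | add u v hu hv => simp only [add_mul, map_add, hu, hv]
  | tmul a b =>
    induction y using TensorProduct.induction_on with
    | zero => simp [mul_zero]
    | add u v hu hv => simp only [mul_add, map_add, hu, hv]
    | tmul c d =>
      rw [Algebra.TensorProduct.tmul_mul_tmul, j23_tmul, j23_tmul, j23_tmul, mul3_tmul,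
        one_mul]

lemma j12_one : j12 (1 : E ⊗[k] E) = 1 := by rw [one2, j12_tmul, one3]
lemma j23_one : j23 (1 : E ⊗[k] E) = 1 := by rw [one2, j23_tmul, one3]

/-- m12 is additive etc. -/
lemma m12_add {G G' : M ⊗[k] M →ₗ[k] M ⊗[k] M} :
    m12 (k := k) (C := M) (G + G') = m12 (k := k) (C := M) G + m12 (k := k) (C := M) G' := by
  simp [m12, LinearMap.rTensor_add, LinearMap.add_comp, LinearMap.comp_add]

lemma m12_zero : m12 (k := k) (C := M) (0 : M ⊗[k] M →ₗ[k] M ⊗[k] M) = 0 := by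
  simp [m12, LinearMap.rTensor_zero]

lemma m13_add {G G' : M ⊗[k] M →ₗ[k] M ⊗[k] M} :
    m13 (k := k) (B := M) (G + G') = m13 (k := k) (B := M) G + m13 (k := k) (B := M) G' := by
  simp [m13, LinearMap.rTensor_add, LinearMap.add_comp, LinearMap.comp_add]

lemma m13_zero : m13 (k := k) (B := M) (0 : M ⊗[k] M →ₗ[k] M ⊗[k] M) = 0 := by
  simp [m13, LinearMap.rTensor_zero]

lemma e3_j12 (x : E ⊗[k] E) : e3 M (j12 x) = m12 (k := k) (C := M) (e2 M x) := by
  induction x using TensorProduct.induction_on with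
  | zero => simp [m12_zero]
  | add u v hu hv => simp only [map_add, m12_add, hu, hv]
  | tmul a b =>
    rw [j12_tmul, e3_tmul, e2_tmul]
    apply TensorProduct.ext'
    intro u y
    induction y using TensorProduct.induction_on with
    | zero => simp
    | add p q hp hq => simp [tmul_add, hp, hq]
    | tmul v w =>
      simp [m12, Module.End.one_eq_id]

lemma e3_j13 (x : E ⊗[k] E) : e3 M (j13 x) = m13 (k := k) (B := M) (e2 M x) := by
  induction x using TensorProduct.induction_on with
  | zero => simp [m13_zero]
  | add u v hu hv => simp only [map_add, m13_add, hu, hv]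
  | tmul a b =>
    rw [j13_tmul, e3_tmul, e2_tmul]
    apply TensorProduct.ext'
    intro u y
    induction y using TensorProduct.induction_on with
    | zero => simp
    | add p q hp hq => simp [tmul_add, hp, hq]
    | tmul v w =>
      simp [m13, Module.End.one_eq_id]

lemma e3_j23 (x : E ⊗[k] E) : e3 M (j23 x) = m23 (k := k) (A := M) (e2 M x) := by
  induction x using TensorProduct.induction_on with
  | zero => simp [m23, LinearMap.lTensor_zero]
  | add u v hu hv => simp only [map_add, hu, hv, m23, LinearMap.lTensor_add]
  | tmul a b =>
    rw [j23_tmul, e3_tmul, e2_tmul]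
    apply TensorProduct.ext'
    intro u y
    induction y using TensorProduct.induction_on with
    | zero => simp
    | add p q hp hq => simp [tmul_add, hp, hq]
    | tmul v w =>
      simp [m23, Module.End.one_eq_id]

end Stmt15Aux

section Stmt15Aux2
variable {M : Type} [AddCommGroup M] [Module k M] [FiniteDimensional k M]

local notation "E" => Module.End k M

noncomputable local instance :
    Semiring ((Module.End k M) ⊗[k] ((Module.End k M) ⊗[k] (Module.End k M))) := by
  exact Algebra.TensorProduct.instSemiring (R := k) (A := E) (B := E ⊗[k] E)

noncomputable local instance :
    Algebra k ((Module.End k M) ⊗[k] ((Module.End k M) ⊗[k] (Module.End k M))) := by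
  exact Algebra.TensorProduct.instAlgebra (R := k) (A := E) (B := E ⊗[k] E)

variable (Φ : M ⊗[k] M ≃ₗ[k] M ⊗[k] M)

/-- Φ as an element of E ⊗ E -/
noncomputable def tE : E ⊗[k] E := (e2 M).symm Φ.toLinearMap
/-- Φ⁻¹ as an element of E ⊗ E -/
noncomputable def tE' : E ⊗[k] E := (e2 M).symm Φ.symm.toLinearMap

lemma tE_mul_tE' : tE Φ * tE' Φ = 1 := by
  apply (e2 M).injective
  rw [e2_mul, e2_one, tE, tE', LinearEquiv.apply_symm_apply, LinearEquiv.apply_symm_apply]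
  ext x
  simp [Module.End.mul_apply]

lemma tE'_mul_tE : tE' Φ * tE Φ = 1 := by
  apply (e2 M).injective
  rw [e2_mul, e2_one, tE, tE', LinearEquiv.apply_symm_apply, LinearEquiv.apply_symm_apply]
  ext x
  simp [Module.End.mul_apply]

lemma pentE (hPE : PE Φ.toLinearMap) :
    j12 (tE Φ) * j13 (tE Φ) * j23 (tE Φ) = j23 (tE Φ) * j12 (tE Φ) := by
  have h : m12 (k := k) (C := M) Φ.toLinearMap ∘ₗ m13 (k := k) (B := M) Φ.toLinearMap ∘ₗ
      m23 (k := k) (A := M) Φ.toLinearMap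
      = m23 (k := k) (A := M) Φ.toLinearMap ∘ₗ m12 (k := k) (C := M) Φ.toLinearMap := hPE
  apply (e3 M).injective
  rw [e3_mul, e3_mul, e3_mul, e3_j12, e3_j13, e3_j23, tE, LinearEquiv.apply_symm_apply]
  simp only [Module.End.mul_eq_comp, LinearMap.comp_assoc]
  exact h

lemma thirteen23 (hPE : PE Φ.toLinearMap) :
    j13 (tE Φ) * j23 (tE Φ) = j12 (tE' Φ) * j23 (tE Φ) * j12 (tE Φ) := by
  have p : j12 (tE Φ) * (j13 (tE Φ) * j23 (tE Φ)) = j23 (tE Φ) * j12 (tE Φ) := by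
    rw [← mul_assoc]; exact pentE Φ hPE
  calc j13 (tE Φ) * j23 (tE Φ)
      = (j12 (tE' Φ) * j12 (tE Φ)) * (j13 (tE Φ) * j23 (tE Φ)) := by
        rw [← j12_mul, tE'_mul_tE, j12_one, one_mul]
    _ = j12 (tE' Φ) * (j12 (tE Φ) * (j13 (tE Φ) * j23 (tE Φ))) := by rw [mul_assoc]
    _ = j12 (tE' Φ) * (j23 (tE Φ) * j12 (tE Φ)) := by rw [p]
    _ = j12 (tE' Φ) * j23 (tE Φ) * j12 (tE Φ) := by rw [mul_assoc]

lemma twelve13 (hPE : PE Φ.toLinearMap) :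
    j12 (tE Φ) * j13 (tE Φ) = j23 (tE Φ) * j12 (tE Φ) * j23 (tE' Φ) := by
  calc j12 (tE Φ) * j13 (tE Φ)
      = (j12 (tE Φ) * j13 (tE Φ)) * (j23 (tE Φ) * j23 (tE' Φ)) := by
        rw [← j23_mul, tE_mul_tE', j23_one, mul_one]
    _ = (j12 (tE Φ) * j13 (tE Φ) * j23 (tE Φ)) * j23 (tE' Φ) := by rw [← mul_assoc]
    _ = j23 (tE Φ) * j12 (tE Φ) * j23 (tE' Φ) := by rw [pentE Φ hPE]

/-- contraction of the first factor with a functional -/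
noncomputable def lcn (ω : Module.Dual k (Module.End k M)) : E ⊗[k] E →ₗ[k] E :=
  (TensorProduct.lid k E).toLinearMap ∘ₗ TensorProduct.map ω LinearMap.id

/-- contraction of the second factor with a functional -/
noncomputable def rcn (ε : Module.Dual k (Module.End k M)) : E ⊗[k] E →ₗ[k] E :=
  (TensorProduct.rid k E).toLinearMap ∘ₗ TensorProduct.map LinearMap.id ε

/-- contraction of the first factor of a triple product -/
noncomputable def cn1 (ω : Module.Dual k (Module.End k M)) :
    E ⊗[k] (E ⊗[k] E) →ₗ[k] E ⊗[k] E :=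
  (TensorProduct.lid k (E ⊗[k] E)).toLinearMap ∘ₗ TensorProduct.map ω LinearMap.id

variable {Φ}

lemma lcn_tmul (ω : Module.Dual k (Module.End k M)) (a b : E) :
    lcn ω (a ⊗ₜ[k] b) = ω a • b := by simp [lcn]

lemma rcn_tmul (ε : Module.Dual k (Module.End k M)) (a b : E) :
    rcn ε (a ⊗ₜ[k] b) = ε b • a := by simp [rcn]

lemma cn1_tmul (ω : Module.Dual k (Module.End k M)) (a : E) (y : E ⊗[k] E) :
    cn1 ω (a ⊗ₜ[k] y) = ω a • y := by simp [cn1]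

lemma lam_eq (ω : Module.Dual k (Module.End k M)) : lam Φ ω = lcn ω (tE Φ) := rfl

lemma rho_eq (ε : Module.Dual k (Module.End k M)) : rho Φ ε = rcn ε (tE Φ) := rfl

lemma K1 (ω ε : Module.Dual k (Module.End k M)) (x : E ⊗[k] E) :
    ε (lcn ω x) = ω (rcn ε x) := by
  induction x using TensorProduct.induction_on with
  | zero => simp
  | add u v hu hv => simp only [map_add, hu, hv]
  | tmul a b => simp [lcn_tmul, rcn_tmul, map_smul, smul_eq_mul, mul_comm]

lemma K2 (ω ω' : Module.Dual k (Module.End k M)) (x y : E ⊗[k] E) :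
    lcn ω' (cn1 ω (j13 x * j23 y)) = lcn ω x * lcn ω' y := by
  induction x using TensorProduct.induction_on with
  | zero => simp [zero_mul]
  | add u v hu hv => simp only [map_add, add_mul, hu, hv]
  | tmul a b =>
    induction y using TensorProduct.induction_on with
    | zero => simp [mul_zero]
    | add u v hu hv => simp only [map_add, mul_add, hu, hv]
    | tmul p q =>
      rw [j13_tmul, j23_tmul, mul3_tmul, one_mul, mul_one]
      simp [cn1_tmul, lcn_tmul, map_smul, smul_smul, smul_mul_assoc, mul_smul_comm,
        mul_comm]

lemma K3 (ω ω' ε : Module.Dual k (Module.End k M)) (x z y : E ⊗[k] E) :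
    ε (lcn ω' (cn1 ω (j12 x * j23 z * j12 y)))
      = (TensorProduct.lid k k)
          (TensorProduct.map ω ω' (x * ((1 : E) ⊗ₜ[k] rcn ε z) * y)) := by
  induction x using TensorProduct.induction_on with
  | zero => simp [zero_mul]
  | add u v hu hv => simp only [map_add, add_mul, hu, hv]
  | tmul a b =>
    induction z using TensorProduct.induction_on with
    | zero => simp [mul_zero, zero_mul, tmul_zero]
    | add u v hu hv =>
        simp only [map_add, mul_add, add_mul, tmul_add, hu, hv]
    | tmul p q =>
      induction y using TensorProduct.induction_on with
      | zero => simp [mul_zero]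
      | add u v hu hv => simp only [map_add, mul_add, hu, hv]
      | tmul u v =>
        rw [j12_tmul, j12_tmul, j23_tmul, rcn_tmul, mul3_tmul, mul3_tmul]
        simp only [one_mul, mul_one, cn1_tmul, lcn_tmul, map_smul, smul_smul,
          Algebra.TensorProduct.tmul_mul_tmul, tmul_smul, smul_tmul', smul_mul_assoc,
          mul_smul_comm, lid_tmul, smul_eq_mul, map_tmul, LinearMap.smul_apply]
        ring
end Stmt15Aux2

section Stmt15Aux3
variable {M : Type} [AddCommGroup M] [Module k M] [FiniteDimensional k M]

local notation "E" => Module.End k M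

noncomputable local instance :
    Semiring ((Module.End k M) ⊗[k] ((Module.End k M) ⊗[k] (Module.End k M))) := by
  exact Algebra.TensorProduct.instSemiring (R := k) (A := E) (B := E ⊗[k] E)

noncomputable local instance :
    Algebra k ((Module.End k M) ⊗[k] ((Module.End k M) ⊗[k] (Module.End k M))) := by
  exact Algebra.TensorProduct.instAlgebra (R := k) (A := E) (B := E ⊗[k] E)

lemma K4 (ω : Module.Dual k (Module.End k M)) (x y z : E ⊗[k] E) :
    cn1 ω (j23 x * j12 y * j23 z) = x * ((lcn ω y) ⊗ₜ[k] (1 : E)) * z := by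
  induction x using TensorProduct.induction_on with
  | zero => simp [zero_mul]
  | add u v hu hv => simp only [map_add, add_mul, hu, hv]
  | tmul p q =>
    induction y using TensorProduct.induction_on with
    | zero => simp [mul_zero, zero_mul, zero_tmul]
    | add u v hu hv => simp only [map_add, mul_add, add_mul, add_tmul, hu, hv]
    | tmul a b =>
      induction z using TensorProduct.induction_on with
      | zero => simp [mul_zero]
      | add u v hu hv => simp only [map_add, mul_add, hu, hv]
      | tmul c d =>
        rw [j23_tmul, j23_tmul, j12_tmul, mul3_tmul, mul3_tmul, lcn_tmul]
        simp only [one_mul, mul_one, cn1_tmul, Algebra.TensorProduct.tmul_mul_tmul,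
          smul_tmul', tmul_smul, smul_mul_assoc, mul_smul_comm, smul_smul]

lemma K5 (ω ε : Module.Dual k (Module.End k M)) (x y : E ⊗[k] E) :
    (TensorProduct.lid k E)
        (TensorProduct.map ε LinearMap.id (cn1 ω (j12 x * j13 y)))
      = lcn ω (((rcn ε x) ⊗ₜ[k] (1 : E)) * y) := by
  induction x using TensorProduct.induction_on with
  | zero => simp [zero_mul, zero_tmul]
  | add u v hu hv => simp only [map_add, add_mul, add_tmul, hu, hv]
  | tmul a b =>
    induction y using TensorProduct.induction_on with
    | zero => simp [mul_zero]
    | add u v hu hv => simp only [map_add, mul_add, hu, hv]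
    | tmul c d =>
      rw [j12_tmul, j13_tmul, mul3_tmul, rcn_tmul]
      simp only [one_mul, mul_one, cn1_tmul, lcn_tmul, map_smul, lid_tmul,
        Algebra.TensorProduct.tmul_mul_tmul, smul_tmul', tmul_smul, smul_mul_assoc,
        mul_smul_comm, smul_smul, map_tmul, LinearMap.id_coe, id_eq,
        LinearMap.smul_apply, smul_eq_mul]
      rw [mul_comm]

lemma K6 (ω ε : Module.Dual k (Module.End k M)) (x y : E ⊗[k] E) :
    (TensorProduct.rid k E)
        (TensorProduct.map LinearMap.id ε (cn1 ω (j12 x * j13 y)))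
      = lcn ω (x * ((rcn ε y) ⊗ₜ[k] (1 : E))) := by
  induction x using TensorProduct.induction_on with
  | zero => simp [zero_mul]
  | add u v hu hv => simp only [map_add, add_mul, hu, hv]
  | tmul a b =>
    induction y using TensorProduct.induction_on with
    | zero => simp [mul_zero, zero_tmul]
    | add u v hu hv => simp only [map_add, mul_add, add_tmul, hu, hv]
    | tmul c d =>
      rw [j12_tmul, j13_tmul, mul3_tmul, rcn_tmul]
      simp only [one_mul, mul_one, cn1_tmul, lcn_tmul, map_smul, rid_tmul,
        Algebra.TensorProduct.tmul_mul_tmul, smul_tmul', tmul_smul, smul_mul_assoc,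
        mul_smul_comm, smul_smul, map_tmul, LinearMap.id_coe, id_eq,
        LinearMap.smul_apply, smul_eq_mul]

lemma deltaL_eq (Φ : M ⊗[k] M ≃ₗ[k] M ⊗[k] M) (x : E) :
    (e2 M).symm (deltaL Φ x) = tE Φ * (x ⊗ₜ[k] (1 : E)) * tE' Φ := by
  apply (e2 M).injective
  rw [LinearEquiv.apply_symm_apply, e2_mul, e2_mul, tE, tE',
    LinearEquiv.apply_symm_apply, LinearEquiv.apply_symm_apply, e2_tmul]
  ext v
  simp [deltaL, LinearEquiv.conj_apply, Module.End.mul_apply, LinearMap.rTensor,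
    Module.End.one_eq_id]

end Stmt15Aux3
/-- Let `Φ` be a solution of the pentagon equation on a finite-dimensional `M`
and `ε ∈ End(M)*` with `ρ(ε) = id`. Then `ε` restricted to the image of `λ` is a unital algebra
homomorphism and a counit for `Δ_l`. -/
theorem stmt15 {M : Type} [AddCommGroup M] [Module k M] [FiniteDimensional k M]
    (Φ : M ⊗[k] M ≃ₗ[k] M ⊗[k] M) (hPE : PE Φ.toLinearMap)
    (ε : Module.Dual k (Module.End k M)) (hε : rho Φ ε = LinearMap.id) :
    (∀ ω : Module.Dual k (Module.End k M), ε (lam Φ ω) = ω LinearMap.id) ∧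
    (∀ ω ω' : Module.Dual k (Module.End k M),
      ε (lam Φ ω ∘ₗ lam Φ ω') = ε (lam Φ ω) * ε (lam Φ ω')) ∧
    (∀ ω : Module.Dual k (Module.End k M),
      TensorProduct.lid k (Module.End k M)
        (TensorProduct.map ε LinearMap.id ((e2 M).symm (deltaL Φ (lam Φ ω)))) = lam Φ ω ∧
      TensorProduct.rid k (Module.End k M)
        (TensorProduct.map LinearMap.id ε ((e2 M).symm (deltaL Φ (lam Φ ω)))) = lam Φ ω) := by
  have hε1 : rcn ε (tE Φ) = (1 : Module.End k M) := by
    rw [← rho_eq]; exact hε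
  have part1 : ∀ ω : Module.Dual k (Module.End k M), ε (lam Φ ω) = ω LinearMap.id := by
    intro ω
    rw [lam_eq, K1 ω ε (tE Φ), hε1]
    rfl
  refine ⟨part1, ?_, ?_⟩
  · intro ω ω'
    have hcomp : lam Φ ω ∘ₗ lam Φ ω' = lcn ω (tE Φ) * lcn ω' (tE Φ) := rfl
    rw [hcomp, ← K2 ω ω' (tE Φ) (tE Φ), thirteen23 Φ hPE,
      K3 ω ω' ε (tE' Φ) (tE Φ) (tE Φ), hε1, ← one2, mul_one, tE'_mul_tE, one2,
      part1 ω, part1 ω']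
    simp [Module.End.one_eq_id, smul_eq_mul]
  · intro ω
    have hd : (e2 M).symm (deltaL Φ (lam Φ ω)) = cn1 ω (j12 (tE Φ) * j13 (tE Φ)) := by
      rw [deltaL_eq, twelve13 Φ hPE, K4 ω (tE Φ) (tE Φ) (tE' Φ), lam_eq]
    constructor
    · rw [hd, K5 ω ε (tE Φ) (tE Φ), hε1, ← one2, one_mul, ← lam_eq]
    · rw [hd, K6 ω ε (tE Φ) (tE Φ), hε1, ← one2, mul_one, ← lam_eq]

end
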